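/- arXiv:cond-mat/0111085 — 5 statements merged into one kernel-verified Lean document; each statement's English description precedes it below -/
import Mathlib

section
/- Let θ(x) = arccos(2ω/(1-(1-ω)tanh²(x√(1-ω))) - 1) for ω ∈ (0,1). Then θ satisfies the ODE θ'' = (cos θ - ω) sin θ on ℝ, with θ'(0) = 0 and θ(x) → 0 as x → ∞. -/
open Real Filter

lemma soliton_L1 (ω S C : ℝ) (hC : C^2 = 1+S^2) (hc : C ≠ 0) :
    1 - (1-ω)*(S/C)^2 = (1+ω*S^2)/C^2 := by
  field_simp
  linear_combination hC

theorem soliton_solves_ode (ω : ℝ) (hω : ω ∈ Set.Ioo (0:ℝ) 1)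
    (θ : ℝ → ℝ)
    (hθ : ∀ x, θ x = arccos (2*ω / (1 - (1-ω) * tanh (x * Real.sqrt (1-ω)) ^ 2) - 1)) :
    (∀ x, deriv (deriv θ) x = (Real.cos (θ x) - ω) * Real.sin (θ x)) ∧
    deriv θ 0 = 0 ∧
    Tendsto θ atTop (nhds 0) := by
  obtain ⟨hω0, hω1⟩ := hω
  set a : ℝ := Real.sqrt (1-ω) with ha_def
  have ha0 : 0 < a := Real.sqrt_pos.2 (by linarith)
  have ha2 : a^2 = 1-ω := Real.sq_sqrt (by linarith)
  set b : ℝ := Real.sqrt ω with hb_def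
  have hb0 : 0 < b := Real.sqrt_pos.2 hω0
  have hb2 : b^2 = ω := Real.sq_sqrt hω0.le
  set D : ℝ → ℝ := fun x => 1 + ω * Real.sinh (x*a)^2 with hD_def
  set U : ℝ → ℝ := fun x => 2*ω*Real.cosh (x*a)^2 / D x - 1 with hU_def
  set g : ℝ → ℝ := fun x => -2*b*(1-ω)*Real.sinh (x*a)/ D x with hg_def
  have hD0 : ∀ x, 0 < D x := by
    intro x
    have := sq_nonneg (Real.sinh (x*a))
    simp only [hD_def]
    nlinarith
  have hc0 : ∀ y : ℝ, 0 < Real.cosh y := Real.cosh_pos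
  have hcsq : ∀ y : ℝ, Real.cosh y ^ 2 = 1 + Real.sinh y ^ 2 := by
    intro y; rw [Real.cosh_sq]; ring
  -- θ equals arccos ∘ U
  have hθU : ∀ x, θ x = arccos (U x) := by
    intro x
    rw [hθ x]
    congr 1
    rw [Real.tanh_eq_sinh_div_cosh,
      soliton_L1 ω _ _ (hcsq (x*a)) (hc0 (x*a)).ne', div_div_eq_mul_div]
  have hUlt : ∀ x, U x < 1 := by
    intro x
    have h1 := hD0 x
    have h3 := hcsq (x*a)
    simp only [hU_def]
    rw [sub_lt_iff_lt_add, div_lt_iff₀ h1]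
    simp only [hD_def] at *
    nlinarith [sq_nonneg (Real.sinh (x*a))]
  have hUgt : ∀ x, -1 < U x := by
    intro x
    have h1 := hD0 x
    have := hc0 (x*a)
    have : 0 < 2*ω*Real.cosh (x*a)^2 / D x := by positivity
    simp only [hU_def]
    linarith
  have hsq : ∀ x, Real.sqrt (1 - U x ^ 2) = 2*b*a*Real.cosh (x*a)/D x := by
    intro x
    have h1 := hD0 x
    have hC := hcsq (x*a)
    have : 1 - U x ^ 2 = (2*b*a*Real.cosh (x*a)/D x)^2 := by
      simp only [hU_def, hD_def] at *
      field_simp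
      linear_combination (-4*Real.cosh (x*a)^2*a^2)*hb2 + (-4*ω*Real.cosh (x*a)^2)*ha2
        + (-4*ω^2*Real.cosh (x*a)^2)*hC
    rw [this, Real.sqrt_sq (by positivity)]
  -- derivative of U
  have hUd : ∀ x, HasDerivAt U (4*ω*(1-ω)*a*Real.sinh (x*a)*Real.cosh (x*a)/(D x)^2) x := by
    intro x
    have hxa : HasDerivAt (fun x : ℝ => x*a) a x := by
      simpa using (hasDerivAt_id x).mul_const a
    have hs : HasDerivAt (fun x => Real.sinh (x*a)) (Real.cosh (x*a)*a) x :=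
      hxa.sinh
    have hc : HasDerivAt (fun x => Real.cosh (x*a)) (Real.sinh (x*a)*a) x :=
      hxa.cosh
    have hnum : HasDerivAt (fun x => 2*ω*Real.cosh (x*a)^2)
        (2*ω*(2*Real.cosh (x*a)^1*(Real.sinh (x*a)*a))) x := (hc.pow 2).const_mul (2*ω)
    have hden : HasDerivAt D (ω*(2*Real.sinh (x*a)^1*(Real.cosh (x*a)*a))) x := by
      simpa [hD_def] using ((hs.pow 2).const_mul ω).const_add 1
    have hdiv := (hnum.div hden (hD0 x).ne').sub_const 1
    refine hdiv.congr_deriv ?_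
    symm
    have h1 := hD0 x
    have hC := hcsq (x*a)
    simp only [hD_def] at *
    field_simp
    simp only [mul_comm a x]
    linear_combination (4*ω*Real.sinh (x*a))*hC
  -- derivative of θ
  have hθd : ∀ x, HasDerivAt θ (g x) x := by
    intro x
    have harc : HasDerivAt arccos (-(1 / Real.sqrt (1 - U x ^ 2))) (U x) :=
      Real.hasDerivAt_arccos (hUgt x).ne' (hUlt x).ne
    have hcomp := harc.comp x (hUd x)
    have heq : θ =ᶠ[nhds x] (arccos ∘ U) := Eventually.of_forall (fun y => hθU y)
    have hfin := hcomp.congr_of_eventuallyEq heq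
    refine hfin.congr_deriv ?_
    symm
    rw [hsq x]
    have h1 := hD0 x
    have hC := hcsq (x*a)
    simp only [hg_def, hD_def] at *
    field_simp
    linear_combination (-4*Real.sinh (x*a))*hb2
  have hderivθ : deriv θ = g := funext fun x => (hθd x).deriv
  -- derivative of g
  have hgd : ∀ x, HasDerivAt g
      ((-2*a*b*(1-ω))*Real.cosh (x*a)*(1-ω*Real.sinh (x*a)^2)/(D x)^2) x := by
    intro x
    have hxa : HasDerivAt (fun x : ℝ => x*a) a x := by
      simpa using (hasDerivAt_id x).mul_const a
    have hs : HasDerivAt (fun x => Real.sinh (x*a)) (Real.cosh (x*a)*a) x :=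
      hxa.sinh
    have hnum : HasDerivAt (fun x => -2*b*(1-ω)*Real.sinh (x*a))
        (-2*b*(1-ω)*(Real.cosh (x*a)*a)) x := hs.const_mul _
    have hden : HasDerivAt D (ω*(2*Real.sinh (x*a)^1*(Real.cosh (x*a)*a))) x := by
      simpa [hD_def] using ((hs.pow 2).const_mul ω).const_add 1
    have hdiv := hnum.div hden (hD0 x).ne'
    refine hdiv.congr_deriv ?_
    symm
    have h1 := hD0 x
    simp only [hD_def] at *
    field_simp
    ring
  refine ⟨?_, ?_, ?_⟩
  · intro x
    rw [hderivθ, (hgd x).deriv, hθU x,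
      Real.cos_arccos (hUgt x).le (hUlt x).le, Real.sin_arccos, hsq x]
    have h1 := hD0 x
    have hC := hcsq (x*a)
    simp only [hU_def, hD_def] at *
    field_simp
    simp only [mul_comm a x]
    linear_combination (-2*ω)*hC
  · rw [hderivθ]
    simp [hg_def]
  · -- limit
    have htanh : Tendsto Real.tanh atTop (nhds 1) := by
      have heq : ∀ y : ℝ, Real.tanh y = (1 - Real.exp (-(2*y)))/(1 + Real.exp (-(2*y))) := by
        intro y
        rw [Real.tanh_eq_sinh_div_cosh, Real.sinh_eq, Real.cosh_eq]
        have h1 : Real.exp y ≠ 0 := (Real.exp_pos y).ne'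
        have h2 : Real.exp y + Real.exp (-y) > 0 := by positivity
        have h3 : (1:ℝ) + Real.exp (-(2*y)) > 0 := by positivity
        rw [show -(2*y) = -y + -y by ring, Real.exp_add, Real.exp_neg]
        field_simp
      rw [tendsto_congr heq]
      have h2y : Tendsto (fun y : ℝ => 2*y) atTop atTop :=
        Tendsto.const_mul_atTop two_pos tendsto_id
      have h0 : Tendsto (fun y : ℝ => Real.exp (-(2*y))) atTop (nhds 0) :=
        Real.tendsto_exp_atBot.comp (tendsto_neg_atTop_atBot.comp h2y)
      have := ((tendsto_const_nhds (x := (1:ℝ))).sub h0).div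
        ((tendsto_const_nhds (x := (1:ℝ))).add h0) (by norm_num)
      simp only [sub_zero, add_zero, div_one] at this
      exact this
    have hxa : Tendsto (fun x : ℝ => x * a) atTop atTop :=
      Tendsto.atTop_mul_const ha0 tendsto_id
    have ht2 : Tendsto (fun x => Real.tanh (x*a)^2) atTop (nhds 1) := by
      have := (htanh.comp hxa).pow 2
      simpa using this
    have hden : Tendsto (fun x => 1 - (1-ω) * Real.tanh (x*a)^2) atTop (nhds ω) := by
      have h := (tendsto_const_nhds (x := (1:ℝ))).sub (ht2.const_mul (1-ω))
      have he : (1:ℝ) - (1-ω)*1 = ω := by ring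
      rw [he] at h
      exact h.congr (fun x => by ring)
    have hfrac : Tendsto (fun x => 2*ω / (1 - (1-ω) * Real.tanh (x*a)^2) - 1) atTop (nhds 1) := by
      have := ((tendsto_const_nhds (x := (2*ω : ℝ))).div hden hω0.ne').sub_const 1
      have h2 : 2*ω/ω - 1 = 1 := by field_simp; ring
      rwa [h2] at this
    have hlim : Tendsto θ atTop (nhds (arccos 1)) := by
      rw [tendsto_congr hθ]
      exact (Real.continuous_arccos.continuousAt.tendsto).comp hfrac
    simpa [Real.arccos_one] using hlim
end

section
/- Fix ω ∈ (-1,1). Define F : ℓ²(ℤ,ℝ) × ℝ → ℓ²(ℤ,ℝ) by [F(θ,α)]_i = (cos θ_i - ω) sin θ_i - α[cos θ_i(sin θ_{i+1} + sin θ_{i-1}) - sin θ_i(cos θ_{i+1} + cos θ_{i-1})]. Then F is well-defined (maps into ℓ²) and continuously differentiable. -/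
open Real
open scoped ENNReal NNReal

noncomputable section
namespace BreatherAux

abbrev H := lp (fun _ : ℤ => ℝ) 2

lemma hp2 : (0:ℝ) < ((2:ℝ≥0∞)).toReal := by norm_num

/-- comparison: domination implies Memℓp -/
lemma memℓp_of_le {x y : ℤ → ℝ} (hy : Memℓp y 2) (h : ∀ i, |x i| ≤ |y i|) :
    Memℓp x 2 := by
  rw [memℓp_gen_iff hp2] at hy ⊢
  refine hy.of_nonneg_of_le (fun i => by positivity) (fun i => ?_)
  have := h i
  simp only [Real.norm_eq_abs]
  gcongr

lemma norm_le_of_le {x y : H} (h : ∀ i, |x i| ≤ |y i|) : ‖x‖ ≤ ‖y‖ := by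
  refine lp.norm_le_of_tsum_le hp2 (norm_nonneg y) ?_
  rw [lp.norm_rpow_eq_tsum hp2 y]
  refine Summable.tsum_le_tsum (fun i => ?_) ((lp.memℓp x).summable hp2) ((lp.memℓp y).summable hp2)
  simp only [Real.norm_eq_abs]
  exact Real.rpow_le_rpow (abs_nonneg _) (h i) (by norm_num)

lemma norm_le_mul_of_le {x : H} {c : ℝ} (hc : 0 ≤ c) {y : H} (h : ∀ i, |x i| ≤ c * |y i|) :
    ‖x‖ ≤ c * ‖y‖ := by
  have h1 : ‖x‖ ≤ ‖c • y‖ := by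
    refine norm_le_of_le fun i => ?_
    rw [lp.coeFn_smul]
    simpa [abs_of_nonneg hc, abs_mul] using h i
  calc ‖x‖ ≤ ‖c • y‖ := h1
    _ = |c| * ‖y‖ := by rw [lp.norm_const_smul (by norm_num)]; simp [Real.norm_eq_abs]
    _ = c * ‖y‖ := by rw [abs_of_nonneg hc]

/-- MVT: global derivative bound gives Lipschitz bound -/
lemma lip_of_deriv {g g' : ℝ → ℝ} {K : ℝ} (hd : ∀ t, HasDerivAt g (g' t) t)
    (hK : ∀ t, |g' t| ≤ K) (a b : ℝ) : |g a - g b| ≤ K * |a - b| := by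
  have := Convex.norm_image_sub_le_of_norm_hasDerivWithin_le
    (f := g) (f' := g') (C := K) (s := Set.univ)
    (fun x _ => (hd x).hasDerivWithinAt) (fun x _ => by simpa using hK x)
    convex_univ (Set.mem_univ b) (Set.mem_univ a)
  simpa [Real.norm_eq_abs] using this

/-- Taylor bound from Lipschitz derivative -/
lemma taylor_bound {f f' : ℝ → ℝ} {L : ℝ} (hL0 : 0 ≤ L) (hd : ∀ t, HasDerivAt f (f' t) t)
    (hL : ∀ a b, |f' a - f' b| ≤ L * |a - b|) (a h : ℝ) :
    |f (a + h) - f a - f' a * h| ≤ L * |h| * |h| := by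
  set g : ℝ → ℝ := fun t => f t - f' a * t with hg
  have hgd : ∀ t, HasDerivAt g (f' t - f' a) t := by
    intro t
    have : HasDerivAt (fun t => f' a * t) (f' a) t := by
      simpa using (hasDerivAt_id t).const_mul (f' a)
    exact (hd t).sub this
  have key := Convex.norm_image_sub_le_of_norm_hasDerivWithin_le
    (f := g) (f' := fun t => f' t - f' a) (C := L * |h|) (s := Metric.closedBall a |h|)
    (fun x _ => (hgd x).hasDerivWithinAt)
    (fun x hx => by
      have h1 : |x - a| ≤ |h| := by
        simpa [Real.dist_eq] using Metric.mem_closedBall.1 hx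
      have := hL x a
      rw [Real.norm_eq_abs]
      calc |f' x - f' a| ≤ L * |x - a| := this
        _ ≤ L * |h| := by gcongr
      )
    (convex_closedBall _ _) (Metric.mem_closedBall_self (abs_nonneg h))
    (show a + h ∈ Metric.closedBall a |h| from
      Metric.mem_closedBall.2 (by simp [Real.dist_eq]))
  have : |g (a + h) - g a| ≤ L * |h| * |a + h - a| := by
    simpa [Real.norm_eq_abs] using key
  have e : g (a + h) - g a = f (a + h) - f a - f' a * h := by simp [hg]; ring
  rw [e] at this
  simpa using this

end BreatherAux

namespace BreatherAux2
open BreatherAux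

/-- Data for a Nemytskii operator: `f` vanishing at 0 with bounded Lipschitz derivative. -/
structure NemData (f f' : ℝ → ℝ) (C L : ℝ) : Prop where
  f0 : f 0 = 0
  deriv : ∀ t, HasDerivAt f (f' t) t
  bound : ∀ t, |f' t| ≤ C
  lip : ∀ a b, |f' a - f' b| ≤ L * |a - b|
  L0 : 0 ≤ L

variable {f f' : ℝ → ℝ} {C L : ℝ}

lemma NemData.C0 (h : NemData f f' C L) : 0 ≤ C := (abs_nonneg _).trans (h.bound 0)

lemma NemData.flip (h : NemData f f' C L) (a b : ℝ) : |f a - f b| ≤ C * |a - b| :=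
  lip_of_deriv h.deriv h.bound a b

lemma NemData.mem (h : NemData f f' C L) (θ : H) : Memℓp (fun i => f (θ i)) 2 := by
  refine memℓp_of_le ((lp.memℓp θ).const_smul C) (fun i => ?_)
  have := h.flip (θ i) 0
  rw [h.f0, sub_zero, sub_zero] at this
  calc |f (θ i)| ≤ C * |θ i| := this
    _ = |(C • (θ : ℤ → ℝ)) i| := by
        simp [abs_mul, abs_of_nonneg h.C0]

/-- The Nemytskii (superposition) operator on `ℓ²(ℤ)`. -/
def Nem (h : NemData f f' C L) : H → H := fun θ => ⟨fun i => f (θ i), h.mem θ⟩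

@[simp] lemma nem_apply (h : NemData f f' C L) (θ : H) (i : ℤ) :
    (Nem h θ : ℤ → ℝ) i = f (θ i) := rfl

/-- Multiplication by a bounded sequence, as a continuous linear map. -/
def mulOp (a : ℤ → ℝ) (M : ℝ) (hM : ∀ i, |a i| ≤ M) (hM0 : 0 ≤ M) : H →L[ℝ] H :=
  LinearMap.mkContinuous
    { toFun := fun x => ⟨fun i => a i * x i, by
        refine memℓp_of_le ((lp.memℓp x).const_smul M) (fun i => ?_)
        calc |a i * x i| = |a i| * |x i| := abs_mul _ _
          _ ≤ M * |x i| := by gcongr; exact hM i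
          _ = |(M • (x : ℤ → ℝ)) i| := by simp [abs_mul, abs_of_nonneg hM0]⟩
      map_add' := fun x y => by
        apply lp.ext; funext i
        simp only [lp.coeFn_add, Pi.add_apply]
        show a i * ((x : ℤ → ℝ) i + (y : ℤ → ℝ) i) = a i * x i + a i * y i
        ring
      map_smul' := fun c x => by
        apply lp.ext; funext i
        simp only [lp.coeFn_smul, Pi.smul_apply, RingHom.id_apply, smul_eq_mul]
        show a i * (c * (x : ℤ → ℝ) i) = c * (a i * x i)
        ring }
    M
    (fun x => by
      refine (norm_le_mul_of_le hM0 (fun i => ?_))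
      calc |a i * x i| = |a i| * |x i| := abs_mul _ _
        _ ≤ M * |x i| := by gcongr; exact hM i)

@[simp] lemma mulOp_apply (a : ℤ → ℝ) (M : ℝ) (hM : ∀ i, |a i| ≤ M) (hM0 : 0 ≤ M)
    (x : H) (i : ℤ) : (mulOp a M hM hM0 x : ℤ → ℝ) i = a i * x i := rfl

/-- Candidate derivative of the Nemytskii operator. -/
def Dop (h : NemData f f' C L) (θ : H) : H →L[ℝ] H :=
  mulOp (fun i => f' (θ i)) C (fun i => h.bound _) h.C0

lemma coord_le_norm (x : H) (i : ℤ) : |x i| ≤ ‖x‖ := by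
  simpa [Real.norm_eq_abs] using lp.norm_apply_le_norm (by norm_num : (2:ℝ≥0∞) ≠ 0) x i

lemma nem_remainder (h : NemData f f' C L) (θ v : H) :
    ‖Nem h (θ + v) - Nem h θ - Dop h θ v‖ ≤ L * ‖v‖ * ‖v‖ := by
  have key : ∀ i, |(Nem h (θ + v) - Nem h θ - Dop h θ v : ℤ → ℝ) i| ≤ (L * ‖v‖) * |v i| := by
    intro i
    have e : (Nem h (θ + v) - Nem h θ - Dop h θ v : ℤ → ℝ) i
        = f (θ i + v i) - f (θ i) - f' (θ i) * v i := by
      simp [lp.coeFn_sub, lp.coeFn_add, Dop]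
    rw [e]
    calc |f (θ i + v i) - f (θ i) - f' (θ i) * v i| ≤ L * |v i| * |v i| :=
          taylor_bound h.L0 h.deriv h.lip (θ i) (v i)
      _ ≤ L * ‖v‖ * |v i| :=
          mul_le_mul_of_nonneg_right
            (mul_le_mul_of_nonneg_left (coord_le_norm v i) h.L0) (abs_nonneg _)
  calc ‖Nem h (θ + v) - Nem h θ - Dop h θ v‖ ≤ (L * ‖v‖) * ‖v‖ :=
        norm_le_mul_of_le (mul_nonneg h.L0 (norm_nonneg _)) key
    _ = L * ‖v‖ * ‖v‖ := by ring

lemma nem_hasFDerivAt (h : NemData f f' C L) (θ : H) :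
    HasFDerivAt (Nem h) (Dop h θ) θ := by
  rw [hasFDerivAt_iff_isLittleO_nhds_zero]
  rw [Asymptotics.isLittleO_iff]
  intro c hc
  have hδ : 0 < c / (L + 1) := div_pos hc (by linarith [h.L0])
  filter_upwards [Metric.ball_mem_nhds (0 : H) hδ] with v hv
  rw [mem_ball_zero_iff] at hv
  calc ‖Nem h (θ + v) - Nem h θ - Dop h θ v‖ ≤ L * ‖v‖ * ‖v‖ := nem_remainder h θ v
    _ ≤ c * ‖v‖ := by
        have h1 : L * ‖v‖ ≤ c := by
          have : L * ‖v‖ ≤ L * (c / (L + 1)) := mul_le_mul_of_nonneg_left hv.le h.L0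
          calc L * ‖v‖ ≤ L * (c / (L + 1)) := this
            _ ≤ c := by
                rw [div_eq_inv_mul, ← mul_assoc]
                have hL1 : (0:ℝ) < L + 1 := by linarith [h.L0]
                rw [mul_comm L (L+1)⁻¹]
                calc (L + 1)⁻¹ * L * c ≤ 1 * c := by
                      apply mul_le_mul_of_nonneg_right _ hc.le
                      rw [inv_mul_le_iff₀ hL1]; linarith
                  _ = c := one_mul c
        calc L * ‖v‖ * ‖v‖ ≤ c * ‖v‖ := by gcongr
          _ = c * ‖v‖ := rfl
    _ = c * ‖v‖ := rfl

lemma dop_lip (h : NemData f f' C L) (θ θ' : H) :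
    ‖Dop h θ - Dop h θ'‖ ≤ L * ‖θ - θ'‖ := by
  refine ContinuousLinearMap.opNorm_le_bound _ (mul_nonneg h.L0 (norm_nonneg _)) (fun x => ?_)
  rw [ContinuousLinearMap.sub_apply]
  refine norm_le_mul_of_le (mul_nonneg h.L0 (norm_nonneg _)) (fun i => ?_)
  have e : ((Dop h θ x - Dop h θ' x : H) : ℤ → ℝ) i = (f' (θ i) - f' (θ' i)) * x i := by
    simp [lp.coeFn_sub, Dop, sub_mul]
  rw [e, abs_mul]
  gcongr
  calc |f' (θ i) - f' (θ' i)| ≤ L * |θ i - θ' i| := h.lip _ _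
    _ ≤ L * ‖θ - θ'‖ := by
        refine mul_le_mul_of_nonneg_left ?_ h.L0
        have := coord_le_norm (θ - θ') i
        rwa [lp.coeFn_sub, Pi.sub_apply] at this

lemma dop_continuous (h : NemData f f' C L) : Continuous (Dop h) := by
  refine (LipschitzWith.of_dist_le_mul (K := L.toNNReal) (fun a b => ?_)).continuous
  rw [dist_eq_norm, dist_eq_norm, Real.coe_toNNReal L h.L0]
  exact dop_lip h a b

lemma nem_contDiff (h : NemData f f' C L) : ContDiff ℝ 1 (Nem h) := by
  rw [contDiff_one_iff_fderiv]
  refine ⟨fun θ => (nem_hasFDerivAt h θ).differentiableAt, ?_⟩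
  have : (fderiv ℝ (Nem h)) = Dop h := funext fun θ => (nem_hasFDerivAt h θ).fderiv
  rw [this]
  exact dop_continuous h

end BreatherAux2

namespace Breather3
open BreatherAux BreatherAux2

lemma memℓp_shift (θ : H) (c : ℤ) : Memℓp (fun i => θ (i + c)) 2 := by
  rw [memℓp_gen_iff hp2]
  have h := (lp.memℓp θ).summable hp2
  exact ((Equiv.addRight c).summable_iff
    (f := fun i => ‖(θ : ℤ → ℝ) i‖ ^ (2:ℝ≥0∞).toReal)).2 h

/-- The shift operator on `ℓ²(ℤ)`. -/
def shift (c : ℤ) : H →L[ℝ] H :=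
  LinearMap.mkContinuous
    { toFun := fun θ => ⟨fun i => θ (i + c), memℓp_shift θ c⟩
      map_add' := fun x y => by
        apply lp.ext; funext i
        simp only [lp.coeFn_add, Pi.add_apply]
      map_smul' := fun r x => by
        apply lp.ext; funext i
        simp only [lp.coeFn_smul, Pi.smul_apply, RingHom.id_apply] }
    1
    (fun θ => by
      rw [one_mul]
      refine lp.norm_le_of_tsum_le hp2 (norm_nonneg θ) ?_
      rw [lp.norm_rpow_eq_tsum hp2 θ]
      have := (Equiv.addRight c).tsum_eq (f := fun i => ‖(θ : ℤ → ℝ) i‖ ^ (2:ℝ≥0∞).toReal)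
      exact le_of_eq this)

@[simp] lemma shift_apply (c : ℤ) (θ : H) (i : ℤ) :
    (shift c θ : ℤ → ℝ) i = θ (i + c) := rfl

end Breather3

end

open BreatherAux BreatherAux2 Breather3

theorem breather_map_wellDefined_C1 (ω : ℝ) (hω : ω ∈ Set.Ioo (-1:ℝ) 1) :
    ∃ F : lp (fun _ : ℤ => ℝ) 2 × ℝ → lp (fun _ : ℤ => ℝ) 2,
      ContDiff ℝ 1 F ∧
      ∀ (θ : lp (fun _ : ℤ => ℝ) 2) (α : ℝ) (i : ℤ),
        (F (θ, α) : ℤ → ℝ) i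
          = (Real.cos (θ i) - ω) * Real.sin (θ i)
            - α * (Real.cos (θ i) * (Real.sin (θ (i+1)) + Real.sin (θ (i-1)))
              - Real.sin (θ i) * (Real.cos (θ (i+1)) + Real.cos (θ (i-1)))) := by
  obtain ⟨hω1, hω2⟩ := hω
  have hωabs : |ω| ≤ 1 := abs_le.2 ⟨le_of_lt hω1, le_of_lt hω2⟩
  -- Nemytskii data for f₁ t = (cos t - ω) sin t
  have h₁ : NemData (fun t => (Real.cos t - ω) * Real.sin t)
      (fun t => -Real.sin t * Real.sin t + (Real.cos t - ω) * Real.cos t) 3 5 := by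
    constructor
    · simp
    · intro t
      have := ((Real.hasDerivAt_cos t).sub_const ω).mul (Real.hasDerivAt_sin t)
      exact this
    · intro t
      have hs := Real.abs_sin_le_one t
      have hc := Real.abs_cos_le_one t
      calc |(-Real.sin t) * Real.sin t + (Real.cos t - ω) * Real.cos t|
          ≤ |(-Real.sin t) * Real.sin t| + |(Real.cos t - ω) * Real.cos t| := abs_add_le _ _
        _ = |Real.sin t| * |Real.sin t| + |Real.cos t - ω| * |Real.cos t| := by
            rw [abs_mul, abs_mul, abs_neg]
        _ ≤ 1 * 1 + (|Real.cos t| + |ω|) * 1 := by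
            gcongr
            exact abs_sub _ _
        _ ≤ 1 * 1 + (1 + 1) * 1 := by gcongr
        _ = 3 := by norm_num
    · refine lip_of_deriv (g' := fun t =>
        (-Real.cos t * Real.sin t + -Real.sin t * Real.cos t)
          + (-Real.sin t * Real.cos t + (Real.cos t - ω) * -Real.sin t)) (fun t => ?_) (fun t => ?_)
      · exact (((Real.hasDerivAt_sin t).neg.mul (Real.hasDerivAt_sin t)).add
          (((Real.hasDerivAt_cos t).sub_const ω).mul (Real.hasDerivAt_cos t)))
      · have hs := Real.abs_sin_le_one t
        have hc := Real.abs_cos_le_one t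
        calc |(-Real.cos t * Real.sin t + -Real.sin t * Real.cos t)
              + (-Real.sin t * Real.cos t + (Real.cos t - ω) * -Real.sin t)|
            ≤ |(-Real.cos t * Real.sin t + -Real.sin t * Real.cos t)|
              + |(-Real.sin t * Real.cos t + (Real.cos t - ω) * -Real.sin t)| := abs_add_le _ _
          _ ≤ (|(-Real.cos t * Real.sin t)| + |(-Real.sin t * Real.cos t)|)
              + (|(-Real.sin t * Real.cos t)| + |((Real.cos t - ω) * -Real.sin t)|) := by
              gcongr <;> exact abs_add_le _ _
          _ = (|Real.cos t| * |Real.sin t| + |Real.sin t| * |Real.cos t|)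
              + (|Real.sin t| * |Real.cos t| + |Real.cos t - ω| * |Real.sin t|) := by
              simp [abs_mul, abs_neg]
          _ ≤ (1 * 1 + 1 * 1) + (1 * 1 + (|Real.cos t| + |ω|) * 1) := by
              gcongr
              exact abs_sub _ _
          _ ≤ (1 * 1 + 1 * 1) + (1 * 1 + (1 + 1) * 1) := by gcongr
          _ = 5 := by norm_num
    · norm_num
  -- Nemytskii data for sin
  have h₂ : NemData Real.sin Real.cos 1 1 := by
    constructor
    · exact Real.sin_zero
    · exact Real.hasDerivAt_sin
    · exact Real.abs_cos_le_one
    · refine lip_of_deriv (g' := fun t => -Real.sin t)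
        (fun t => Real.hasDerivAt_cos t) (fun t => ?_)
      rw [abs_neg]; exact Real.abs_sin_le_one t
    · norm_num
  refine ⟨fun p => Nem h₁ p.1
      - p.2 • (Nem h₂ (shift 1 p.1 - p.1) + Nem h₂ (shift (-1) p.1 - p.1)), ?_, ?_⟩
  · have cshift : ∀ c : ℤ, ContDiff ℝ 1 (fun p : H × ℝ => shift c p.1 - p.1) := fun c =>
      (((shift c).contDiff).comp contDiff_fst).sub contDiff_fst
    exact ((nem_contDiff h₁).comp contDiff_fst).sub
      (contDiff_snd.smul (((nem_contDiff h₂).comp (cshift 1)).add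
        ((nem_contDiff h₂).comp (cshift (-1)))))
  · intro θ α i
    have e1 : i + -1 = i - 1 := by ring
    simp only [lp.coeFn_sub, lp.coeFn_add, lp.coeFn_smul, Pi.sub_apply, Pi.add_apply,
      Pi.smul_apply, smul_eq_mul, nem_apply, shift_apply, e1]
    rw [Real.sin_sub, Real.sin_sub]
    ring
end

section
/- For all ω ∈ (-1,1) there exist ε > 0 and a C¹ map α ↦ θ^α from [0,ε) to ℓ²(ℤ,ℝ) such that F(θ^α, α) = 0 for all α ∈ [0,ε) and θ^0 = θ^b, where θ^b is the 1-site breather (θ^b_0 = arccos ω, θ^b_i = 0 otherwise). In particular, discrete breathers (spatially localized solutions of the breather equation) exist for all sufficiently small coupling α. -/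
set_option maxHeartbeats 1600000

open Real
open scoped ENNReal

noncomputable section BreatherAux

namespace BreatherAux

abbrev E2 := lp (fun _ : ℤ => ℝ) 2

lemma two_pos' : (0:ℝ) < (2:ℝ≥0∞).toReal := by norm_num

lemma mem2_of_le {f g : ℤ → ℝ} (hg : Memℓp g 2) (h : ∀ i, ‖f i‖ ≤ ‖g i‖) : Memℓp f 2 := by
  apply memℓp_gen
  have hs := hg.summable two_pos'
  refine hs.of_nonneg_of_le (fun i => ?_) (fun i => ?_)
  · positivity
  · exact Real.rpow_le_rpow (norm_nonneg _) (h i) (by norm_num)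

lemma norm2_mono {f g : E2} (h : ∀ i, ‖f i‖ ≤ ‖g i‖) : ‖f‖ ≤ ‖g‖ := by
  refine lp.norm_le_of_tsum_le two_pos' (norm_nonneg g) ?_
  exact le_of_le_of_eq
    (Summable.tsum_le_tsum (fun i => Real.rpow_le_rpow (norm_nonneg _) (h i) (by norm_num))
      ((lp.memℓp f).summable two_pos') ((lp.memℓp g).summable two_pos'))
    (lp.norm_rpow_eq_tsum two_pos' g).symm

lemma mulMem (m : ℤ → ℝ) {C : ℝ} (hm : ∀ i, |m i| ≤ C) (h : E2) :
    Memℓp (fun i => m i * h i) 2 := by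
  refine mem2_of_le ((lp.memℓp h).const_smul C) (fun i => ?_)
  simp only [Pi.smul_apply, smul_eq_mul, Real.norm_eq_abs, abs_mul]
  have h0 : (0:ℝ) ≤ C := le_trans (abs_nonneg _) (hm 0)
  rw [abs_of_nonneg h0]
  exact mul_le_mul_of_nonneg_right (hm i) (abs_nonneg _)

noncomputable def mulRaw (m : ℤ → ℝ) {C : ℝ} (hm : ∀ i, |m i| ≤ C) : E2 →ₗ[ℝ] E2 where
  toFun h := ⟨fun i => m i * h i, mulMem m hm h⟩
  map_add' f g := by
    apply lp.ext; funext i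
    show m i * ((f + g : E2) i) = _
    simp [lp.coeFn_add, mul_add]
    rfl
  map_smul' c f := by
    apply lp.ext; funext i
    show m i * ((c • f : E2) i) = _
    simp [lp.coeFn_smul]
    ring

lemma mulRaw_apply (m : ℤ → ℝ) {C : ℝ} (hm : ∀ i, |m i| ≤ C) (h : E2) (i : ℤ) :
    ((mulRaw m hm h : E2) : ℤ → ℝ) i = m i * h i := rfl

lemma mulRaw_norm (m : ℤ → ℝ) {C : ℝ} (hm : ∀ i, |m i| ≤ C) (h : E2) :
    ‖mulRaw m hm h‖ ≤ C * ‖h‖ := by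
  have h0 : (0:ℝ) ≤ C := le_trans (abs_nonneg _) (hm 0)
  have h1 : ‖mulRaw m hm h‖ ≤ ‖C • h‖ := by
    refine norm2_mono (fun i => ?_)
    rw [mulRaw_apply, lp.coeFn_smul]
    simp only [Pi.smul_apply, smul_eq_mul, Real.norm_eq_abs, abs_mul, abs_of_nonneg h0]
    exact mul_le_mul_of_nonneg_right (hm i) (abs_nonneg _)
  calc ‖mulRaw m hm h‖ ≤ ‖C • h‖ := h1
    _ = C * ‖h‖ := by rw [norm_smul]; simp [abs_of_nonneg h0]

noncomputable def mulCLM (m : ℤ → ℝ) {C : ℝ} (hm : ∀ i, |m i| ≤ C) : E2 →L[ℝ] E2 :=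
  LinearMap.mkContinuous (mulRaw m hm) C (mulRaw_norm m hm)

@[simp] lemma mulCLM_apply (m : ℤ → ℝ) {C : ℝ} (hm : ∀ i, |m i| ≤ C) (h : E2) (i : ℤ) :
    ((mulCLM m hm h : E2) : ℤ → ℝ) i = m i * h i := rfl

lemma shiftMem (n : ℤ) (h : E2) : Memℓp (fun i => h (i + n)) 2 := by
  apply memℓp_gen
  have hs := (lp.memℓp h).summable two_pos'
  exact ((Equiv.addRight n).summable_iff (f := fun i => ‖h i‖ ^ (2:ℝ≥0∞).toReal)).2 hs

noncomputable def shiftCLM (n : ℤ) : E2 →L[ℝ] E2 :=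
  LinearMap.mkContinuous
    { toFun := fun h => ⟨fun i => h (i + n), shiftMem n h⟩
      map_add' := fun f g => by
        apply lp.ext; funext i
        show (f + g : E2) (i + n) = _
        simp [lp.coeFn_add]
        rfl
      map_smul' := fun c f => by
        apply lp.ext; funext i
        show (c • f : E2) (i + n) = _
        simp [lp.coeFn_smul] }
    1 (fun h => by
      rw [one_mul]
      refine lp.norm_le_of_tsum_le two_pos' (norm_nonneg h) ?_
      have e1 : ∑' (i : ℤ), ‖(h : ℤ → ℝ) (i + n)‖ ^ (2:ℝ≥0∞).toReal
          = ∑' (i : ℤ), ‖(h : ℤ → ℝ) i‖ ^ (2:ℝ≥0∞).toReal :=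
        (Equiv.addRight n).tsum_eq (f := fun i => ‖(h : ℤ → ℝ) i‖ ^ (2:ℝ≥0∞).toReal)
      exact le_of_eq (e1.trans (lp.norm_rpow_eq_tsum two_pos' h).symm))

@[simp] lemma shiftCLM_apply (n : ℤ) (h : E2) (i : ℤ) :
    ((shiftCLM n h : E2) : ℤ → ℝ) i = h (i + n) := rfl

lemma lip_of_deriv_s7 {g g' : ℝ → ℝ} {C : ℝ} (hd : ∀ x, HasDerivAt g (g' x) x)
    (hb : ∀ x, |g' x| ≤ C) (x y : ℝ) : |g x - g y| ≤ C * |x - y| := by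
  have := Convex.norm_image_sub_le_of_norm_hasDerivWithin_le (s := (Set.univ : Set ℝ))
    (f := g) (f' := g') (fun z _ => (hd z).hasDerivWithinAt)
    (fun z _ => hb z) convex_univ (Set.mem_univ y) (Set.mem_univ x)
  simpa [Real.norm_eq_abs] using this

lemma taylor_of_lip {g g' : ℝ → ℝ} {C : ℝ} (hd : ∀ x, HasDerivAt g (g' x) x)
    (hlip : ∀ x y, |g' x - g' y| ≤ C * |x - y|) (x h : ℝ) :
    |g (x + h) - g x - g' x * h| ≤ C * h ^ 2 := by
  set φ : ℝ → ℝ := fun t => g t - g' x * t with hφ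
  have hdφ : ∀ t, HasDerivAt φ (g' t - g' x) t := by
    intro t
    have h2 : HasDerivAt (fun t : ℝ => g' x * t) (g' x) t := by
      simpa using (hasDerivAt_id t).const_mul (g' x)
    exact (hd t).sub h2
  have key := Convex.norm_image_sub_le_of_norm_hasDerivWithin_le
    (s := Set.uIcc x (x + h)) (f := φ) (f' := fun t => g' t - g' x)
    (fun t _ => (hdφ t).hasDerivWithinAt)
    (fun t ht => by
      have h1 : |t - x| ≤ |x + h - x| := Set.abs_sub_left_of_mem_uIcc ht
      have h2 : |g' t - g' x| ≤ C * |t - x| := hlip t x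
      have hC : 0 ≤ C := by
        have h0 := (abs_nonneg (g' x - g' (x + 1))).trans (hlip x (x + 1))
        simpa using h0
      calc ‖g' t - g' x‖ = |g' t - g' x| := rfl
        _ ≤ C * |t - x| := h2
        _ ≤ C * |h| := by
            refine mul_le_mul_of_nonneg_left ?_ hC
            simpa using h1)
    (convex_uIcc _ _) Set.left_mem_uIcc Set.right_mem_uIcc
  have hrw : ‖φ (x + h) - φ x‖ = |g (x + h) - g x - g' x * h| := by
    simp only [hφ, Real.norm_eq_abs]
    ring_nf
  calc |g (x + h) - g x - g' x * h| = ‖φ (x + h) - φ x‖ := hrw.symm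
    _ ≤ (C * |h|) * ‖x + h - x‖ := key
    _ = C * h ^ 2 := by
        have hx : x + h - x = h := by ring
        rw [hx, Real.norm_eq_abs, mul_assoc, abs_mul_abs_self, sq]

structure Nice where
  g : ℝ → ℝ
  g' : ℝ → ℝ
  C : ℝ
  hg0 : g 0 = 0
  hd : ∀ x, HasDerivAt g (g' x) x
  hb : ∀ x, |g' x| ≤ C
  hlip : ∀ x y, |g' x - g' y| ≤ C * |x - y|

namespace Nice
variable (P : Nice)

lemma hC : 0 ≤ P.C := le_trans (abs_nonneg _) (P.hb 0)

lemma gbound (x : ℝ) : |P.g x| ≤ P.C * |x| := by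
  have := lip_of_deriv_s7 P.hd P.hb x 0
  simpa [P.hg0] using this

lemma nemMem (u : E2) : Memℓp (fun i => P.g (u i)) 2 := by
  refine mem2_of_le ((lp.memℓp u).const_smul P.C) (fun i => ?_)
  simp only [Pi.smul_apply, smul_eq_mul, Real.norm_eq_abs, abs_mul, abs_of_nonneg P.hC]
  exact P.gbound _

noncomputable def nem (u : E2) : E2 := ⟨fun i => P.g (u i), P.nemMem u⟩

@[simp] lemma nem_apply (u : E2) (i : ℤ) : ((P.nem u : E2) : ℤ → ℝ) i = P.g (u i) := rfl

noncomputable def D (u : E2) : E2 →L[ℝ] E2 := mulCLM (fun i => P.g' (u i)) (fun i => P.hb (u i))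

lemma err_bound (u h : E2) : ‖P.nem (u + h) - P.nem u - P.D u h‖ ≤ P.C * ‖h‖ * ‖h‖ := by
  have key : ∀ i : ℤ, ‖(P.nem (u + h) - P.nem u - P.D u h : E2) i‖
      ≤ ‖((P.C * ‖h‖) • h : E2) i‖ := by
    intro i
    have hc : ((P.nem (u + h) - P.nem u - P.D u h : E2) : ℤ → ℝ) i
        = P.g (u i + h i) - P.g (u i) - P.g' (u i) * h i := by
      simp [lp.coeFn_sub, lp.coeFn_add, D]
    have ht := taylor_of_lip P.hd P.hlip (u i) (h i)
    have hhi : |h i| ≤ ‖h‖ := by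
      simpa using lp.norm_apply_le_norm (by norm_num) h i
    rw [hc, lp.coeFn_smul]
    simp only [Pi.smul_apply, smul_eq_mul, Real.norm_eq_abs]
    rw [abs_mul, abs_of_nonneg (mul_nonneg P.hC (norm_nonneg h))]
    calc |P.g (u i + h i) - P.g (u i) - P.g' (u i) * h i| ≤ P.C * (h i) ^ 2 := ht
      _ = P.C * (|h i| * |h i|) := by rw [sq, abs_mul_abs_self]
      _ ≤ P.C * (‖h‖ * |h i|) := by
          refine mul_le_mul_of_nonneg_left ?_ P.hC
          exact mul_le_mul_of_nonneg_right hhi (abs_nonneg _)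
      _ = P.C * ‖h‖ * |h i| := by ring
  calc ‖P.nem (u + h) - P.nem u - P.D u h‖ ≤ ‖(P.C * ‖h‖) • h‖ := norm2_mono key
    _ = P.C * ‖h‖ * ‖h‖ := by
        rw [norm_smul, Real.norm_eq_abs,
          abs_of_nonneg (mul_nonneg P.hC (norm_nonneg h))]

lemma hasFDerivAt (u : E2) : HasFDerivAt P.nem (P.D u) u := by
  rw [hasFDerivAt_iff_isLittleO_nhds_zero]
  rw [Asymptotics.isLittleO_iff]
  intro ε hε
  have hev : ∀ᶠ h : E2 in nhds (0 : E2), P.C * ‖h‖ ≤ ε := by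
    have ht0 : Filter.Tendsto (fun h : E2 => P.C * ‖h‖) (nhds (0:E2))
        (nhds (P.C * ‖(0:E2)‖)) :=
      ((continuous_norm (E := E2)).tendsto (0:E2)).const_mul P.C
    rw [norm_zero, mul_zero] at ht0
    exact (ht0.eventually_lt_const hε).mono fun h hh => hh.le
  refine hev.mono fun h hh => ?_
  calc ‖P.nem (u + h) - P.nem u - P.D u h‖ ≤ P.C * ‖h‖ * ‖h‖ := P.err_bound u h
    _ ≤ ε * ‖h‖ := mul_le_mul_of_nonneg_right hh (norm_nonneg _)

lemma D_lip (u v : E2) : ‖P.D u - P.D v‖ ≤ P.C * ‖u - v‖ := by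
  refine ContinuousLinearMap.opNorm_le_bound _
    (mul_nonneg P.hC (norm_nonneg _)) fun h => ?_
  have key : ∀ i : ℤ, ‖((P.D u - P.D v) h : E2) i‖ ≤ ‖((P.C * ‖u - v‖) • h : E2) i‖ := by
    intro i
    have hc : (((P.D u - P.D v) h : E2) : ℤ → ℝ) i = (P.g' (u i) - P.g' (v i)) * h i := by
      simp [ContinuousLinearMap.sub_apply, lp.coeFn_sub, D, sub_mul]
    have huv : |u i - v i| ≤ ‖u - v‖ := by
      have := lp.norm_apply_le_norm (by norm_num : (2:ℝ≥0∞) ≠ 0) (u - v) i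
      simpa [lp.coeFn_sub] using this
    rw [hc, lp.coeFn_smul]
    simp only [Pi.smul_apply, smul_eq_mul, Real.norm_eq_abs]
    rw [abs_mul, abs_mul, abs_of_nonneg (mul_nonneg P.hC (norm_nonneg (u - v)))]
    refine mul_le_mul_of_nonneg_right ((P.hlip _ _).trans ?_) (abs_nonneg _)
    exact mul_le_mul_of_nonneg_left huv P.hC
  calc ‖(P.D u - P.D v) h‖ ≤ ‖(P.C * ‖u - v‖) • h‖ := norm2_mono key
    _ = P.C * ‖u - v‖ * ‖h‖ := by
        rw [norm_smul, Real.norm_eq_abs,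
          abs_of_nonneg (mul_nonneg P.hC (norm_nonneg _))]

lemma contDiff : ContDiff ℝ 1 P.nem := by
  rw [contDiff_one_iff_fderiv]
  have hdif : Differentiable ℝ P.nem := fun u => (P.hasFDerivAt u).differentiableAt
  refine ⟨hdif, ?_⟩
  have hfd : fderiv ℝ P.nem = fun u => P.D u :=
    funext fun u => (P.hasFDerivAt u).fderiv
  rw [hfd]
  refine (LipschitzWith.of_dist_le_mul (K := P.C.toNNReal) fun u v => ?_).continuous
  rw [dist_eq_norm, dist_eq_norm]
  calc ‖P.D u - P.D v‖ ≤ P.C * ‖u - v‖ := P.D_lip u v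
    _ ≤ P.C.toNNReal * ‖u - v‖ :=
        mul_le_mul_of_nonneg_right (Real.le_coe_toNNReal P.C) (norm_nonneg _)

end Nice

noncomputable def Psin : Nice where
  g := Real.sin
  g' := Real.cos
  C := 8
  hg0 := Real.sin_zero
  hd := Real.hasDerivAt_sin
  hb x := (Real.abs_cos_le_one x).trans (by norm_num)
  hlip x y := by
    refine lip_of_deriv_s7 (g := Real.cos) (g' := fun t => -Real.sin t)
      (fun t => Real.hasDerivAt_cos t) (fun t => ?_) x y
    rw [abs_neg]
    exact (Real.abs_sin_le_one t).trans (by norm_num)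

noncomputable def Pf (ω : ℝ) (hω1 : |ω| ≤ 1) : Nice where
  g x := (Real.cos x - ω) * Real.sin x
  g' x := -Real.sin x * Real.sin x + (Real.cos x - ω) * Real.cos x
  C := 8
  hg0 := by simp
  hd x := by
    exact ((Real.hasDerivAt_cos x).sub_const ω).mul (Real.hasDerivAt_sin x)
  hb x := by
    have s1 := Real.abs_sin_le_one x
    have c1 := Real.abs_cos_le_one x
    calc |-Real.sin x * Real.sin x + (Real.cos x - ω) * Real.cos x|
        ≤ |-Real.sin x * Real.sin x| + |(Real.cos x - ω) * Real.cos x| := abs_add_le _ _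
      _ ≤ 1 * 1 + (1 + 1) * 1 := by
          rw [abs_mul, abs_mul, abs_neg]
          gcongr
          exact (abs_sub _ _).trans (by gcongr <;> assumption)
      _ ≤ 8 := by norm_num
  hlip x y := by
    refine lip_of_deriv_s7
      (g := fun t => -Real.sin t * Real.sin t + (Real.cos t - ω) * Real.cos t)
      (g' := fun t => (-Real.cos t * Real.sin t + -Real.sin t * Real.cos t)
        + (-Real.sin t * Real.cos t + (Real.cos t - ω) * -Real.sin t))
      (fun t => ?_) (fun t => ?_) x y
    · exact ((Real.hasDerivAt_sin t).neg.mul (Real.hasDerivAt_sin t)).add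
        (((Real.hasDerivAt_cos t).sub_const ω).mul (Real.hasDerivAt_cos t))
    · have s1 := Real.abs_sin_le_one t
      have c1 := Real.abs_cos_le_one t
      have h1 : |Real.cos t - ω| ≤ 2 := (abs_sub _ _).trans (by
        calc |Real.cos t| + |ω| ≤ 1 + 1 := by gcongr
          _ = 2 := by norm_num)
      calc |(-Real.cos t * Real.sin t + -Real.sin t * Real.cos t)
            + (-Real.sin t * Real.cos t + (Real.cos t - ω) * -Real.sin t)|
          ≤ |(-Real.cos t * Real.sin t + -Real.sin t * Real.cos t)|
            + |(-Real.sin t * Real.cos t + (Real.cos t - ω) * -Real.sin t)| := abs_add_le _ _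
        _ ≤ (|(-Real.cos t * Real.sin t)| + |(-Real.sin t * Real.cos t)|)
            + (|(-Real.sin t * Real.cos t)| + |(Real.cos t - ω) * -Real.sin t|) := by
            gcongr <;> exact abs_add_le _ _
        _ ≤ (1 * 1 + 1 * 1) + (1 * 1 + 2 * 1) := by
            simp only [abs_mul, abs_neg]
            gcongr
        _ ≤ 8 := by norm_num

end BreatherAux

end BreatherAux

open BreatherAux

theorem one_site_breather_continuation (ω : ℝ) (hω : ω ∈ Set.Ioo (-1:ℝ) 1)
    (θb : lp (fun _ : ℤ => ℝ) 2)
    (hθb : (θb : ℤ → ℝ) 0 = Real.arccos ω ∧ ∀ i : ℤ, i ≠ 0 → (θb : ℤ → ℝ) i = 0)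
    (F : lp (fun _ : ℤ => ℝ) 2 × ℝ → lp (fun _ : ℤ => ℝ) 2)
    (hF : ∀ (θ : lp (fun _ : ℤ => ℝ) 2) (α : ℝ) (i : ℤ),
      (F (θ, α) : ℤ → ℝ) i
        = (Real.cos (θ i) - ω) * Real.sin (θ i)
          - α * (Real.cos (θ i) * (Real.sin (θ (i+1)) + Real.sin (θ (i-1)))
            - Real.sin (θ i) * (Real.cos (θ (i+1)) + Real.cos (θ (i-1))))) :
    ∃ ε > (0:ℝ), ∃ Θ : ℝ → lp (fun _ : ℤ => ℝ) 2,
      ContDiffOn ℝ 1 Θ (Set.Ico 0 ε) ∧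
      (∀ α ∈ Set.Ico (0:ℝ) ε, F (Θ α, α) = 0) ∧
      Θ 0 = θb := by
  classical
  obtain ⟨hω1, hω2⟩ := hω
  have hωle : |ω| ≤ 1 := by rw [abs_le]; constructor <;> linarith
  set P : Nice := Pf ω hωle with hP
  set Q : Nice := Psin with hQ
  set A : E2 →L[ℝ] E2 := shiftCLM 1 - ContinuousLinearMap.id ℝ E2 with hA
  set B : E2 →L[ℝ] E2 := shiftCLM (-1) - ContinuousLinearMap.id ℝ E2 with hB
  set K : E2 → E2 := fun θ => Q.nem (A θ) + Q.nem (B θ) with hK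
  set Fc : E2 × ℝ → E2 := fun p => P.nem p.1 - p.2 • K p.1 with hFcdef
  have hAcoe : ∀ (θ : E2) (i : ℤ), ((A θ : E2) : ℤ → ℝ) i = θ (i + 1) - θ i := by
    intro θ i
    rw [hA, ContinuousLinearMap.sub_apply, lp.coeFn_sub]
    simp
  have hBcoe : ∀ (θ : E2) (i : ℤ), ((B θ : E2) : ℤ → ℝ) i = θ (i - 1) - θ i := by
    intro θ i
    rw [hB, ContinuousLinearMap.sub_apply, lp.coeFn_sub]
    simp [sub_eq_add_neg]
  have hFccoe : ∀ (θ : E2) (α : ℝ) (i : ℤ), ((Fc (θ, α) : E2) : ℤ → ℝ) i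
      = (Real.cos (θ i) - ω) * Real.sin (θ i)
        - α * (Real.sin (θ (i+1) - θ i) + Real.sin (θ (i-1) - θ i)) := by
    intro θ α i
    rw [hFcdef]
    simp only [lp.coeFn_sub, lp.coeFn_smul, Pi.sub_apply, Pi.smul_apply, smul_eq_mul]
    rw [hK]
    simp only [lp.coeFn_add, Pi.add_apply, Nice.nem_apply]
    rw [hAcoe, hBcoe]
    rfl
  -- F coincides with the concrete map Fc
  have hFeq : F = Fc := by
    funext p
    obtain ⟨θ, α⟩ := p
    apply lp.ext; funext i
    rw [hF θ α i, hFccoe θ α i, Real.sin_sub, Real.sin_sub]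
    ring
  -- the base point
  set x0 : E2 × ℝ := (θb, (0:ℝ)) with hx0
  -- diagonal multiplier
  set d : ℤ → ℝ := fun i => P.g' (θb i) with hd
  have dbd : ∀ i, |d i| ≤ P.C := fun i => P.hb (θb i)
  have hd0 : d 0 = -(1 - ω ^ 2) := by
    rw [hd]
    simp only [hθb.1, hP]
    show -Real.sin (Real.arccos ω) * Real.sin (Real.arccos ω)
        + (Real.cos (Real.arccos ω) - ω) * Real.cos (Real.arccos ω) = -(1 - ω ^ 2)
    rw [Real.cos_arccos (by linarith) (by linarith), Real.sin_arccos]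
    rw [sub_self, zero_mul, add_zero, neg_mul, Real.mul_self_sqrt (by nlinarith)]
  have hdi : ∀ i : ℤ, i ≠ 0 → d i = 1 - ω := by
    intro i hi
    rw [hd]
    simp only [hθb.2 i hi, hP]
    show -Real.sin 0 * Real.sin 0 + (Real.cos 0 - ω) * Real.cos 0 = 1 - ω
    simp
  have h1ω : (0:ℝ) < 1 - ω := by linarith
  have h1ω2 : (0:ℝ) < 1 - ω ^ 2 := by nlinarith
  have hdne : ∀ i, d i ≠ 0 := by
    intro i
    by_cases hi : i = 0
    · rw [hi, hd0]; intro hcon; nlinarith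
    · rw [hdi i hi]; intro hcon; nlinarith
  set dinv : ℤ → ℝ := fun i => (d i)⁻¹ with hdinv
  set Ci : ℝ := (1 - ω)⁻¹ + (1 - ω ^ 2)⁻¹ with hCi
  have hdinvb : ∀ i, |dinv i| ≤ Ci := by
    intro i
    have hp1 : (0:ℝ) < (1 - ω)⁻¹ := by positivity
    have hp2 : (0:ℝ) < (1 - ω ^ 2)⁻¹ := by positivity
    by_cases hi : i = 0
    · rw [hdinv]; simp only [hi, hd0]
      rw [abs_inv, abs_neg, abs_of_nonneg (le_of_lt h1ω2), hCi]
      linarith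
    · rw [hdinv]; simp only [hdi i hi]
      rw [abs_of_nonneg (le_of_lt hp1)]
      rw [hCi]; linarith
  -- the fixed vector K0
  set K0 : E2 := K θb with hK0
  -- the derivative of G at x0, as a continuous linear equivalence
  set DGm : E2 × ℝ →L[ℝ] E2 × ℝ :=
    ((mulCLM d dbd).comp (ContinuousLinearMap.fst ℝ E2 ℝ)
      - (ContinuousLinearMap.snd ℝ E2 ℝ).smulRight K0).prod
      (ContinuousLinearMap.snd ℝ E2 ℝ) with hDGm
  set DGi : E2 × ℝ →L[ℝ] E2 × ℝ :=
    ((mulCLM dinv hdinvb).comp ((ContinuousLinearMap.fst ℝ E2 ℝ)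
      + (ContinuousLinearMap.snd ℝ E2 ℝ).smulRight K0)).prod
      (ContinuousLinearMap.snd ℝ E2 ℝ) with hDGi
  have hleft : Function.LeftInverse DGi DGm := by
    intro z
    obtain ⟨h, a⟩ := z
    rw [hDGm, hDGi]
    simp only [ContinuousLinearMap.prod_apply, ContinuousLinearMap.comp_apply,
      ContinuousLinearMap.sub_apply, ContinuousLinearMap.add_apply,
      ContinuousLinearMap.coe_fst', ContinuousLinearMap.coe_snd',
      ContinuousLinearMap.smulRight_apply]
    refine Prod.ext ?_ rfl
    apply lp.ext; funext i
    rw [mulCLM_apply]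
    simp only [lp.coeFn_add, lp.coeFn_sub, lp.coeFn_smul, Pi.add_apply, Pi.sub_apply,
      Pi.smul_apply, smul_eq_mul, mulCLM_apply]
    have hcan : d i * h i - a * K0 i + a * K0 i = d i * h i := by ring
    rw [hcan, hdinv, ← mul_assoc, inv_mul_cancel₀ (hdne i), one_mul]
  have hright : Function.RightInverse DGi DGm := by
    intro z
    obtain ⟨y, b⟩ := z
    rw [hDGm, hDGi]
    simp only [ContinuousLinearMap.prod_apply, ContinuousLinearMap.comp_apply,
      ContinuousLinearMap.sub_apply, ContinuousLinearMap.add_apply,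
      ContinuousLinearMap.coe_fst', ContinuousLinearMap.coe_snd',
      ContinuousLinearMap.smulRight_apply]
    refine Prod.ext ?_ rfl
    apply lp.ext; funext i
    simp only [lp.coeFn_sub, Pi.sub_apply, mulCLM_apply, lp.coeFn_add, Pi.add_apply,
      lp.coeFn_smul, Pi.smul_apply, smul_eq_mul]
    rw [hdinv, ← mul_assoc, mul_inv_cancel₀ (hdne i), one_mul]
    ring
  set e : (E2 × ℝ) ≃L[ℝ] (E2 × ℝ) :=
    ContinuousLinearEquiv.equivOfInverse DGm DGi hleft hright with he
  have hecoe : (e : E2 × ℝ →L[ℝ] E2 × ℝ) = DGm := by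
    ext z <;> rfl
  -- smoothness of the concrete map
  have hKc : ContDiff ℝ 1 K := by
    rw [hK]
    exact (Q.contDiff.comp A.contDiff).add (Q.contDiff.comp B.contDiff)
  have hFcc : ContDiff ℝ 1 Fc := by
    rw [hFcdef]
    exact (P.contDiff.comp contDiff_fst).sub
      (contDiff_snd.smul (hKc.comp contDiff_fst))
  set G : E2 × ℝ → E2 × ℝ := fun p => (Fc p, p.2) with hG
  have hGc : ContDiff ℝ 1 G := hFcc.prodMk contDiff_snd
  -- derivative of G at x0
  have hPD : P.D θb = mulCLM d dbd := rfl
  have h1 : HasFDerivAt (fun p : E2 × ℝ => P.nem p.1)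
      ((mulCLM d dbd).comp (ContinuousLinearMap.fst ℝ E2 ℝ)) x0 := by
    rw [← hPD]
    exact (P.hasFDerivAt θb).comp (f := Prod.fst) x0 hasFDerivAt_fst
  have h2 : HasFDerivAt (fun p : E2 × ℝ => p.2 • K p.1)
      ((ContinuousLinearMap.snd ℝ E2 ℝ).smulRight K0) x0 := by
    have hKdiff : DifferentiableAt ℝ K θb := (hKc.differentiable one_ne_zero).differentiableAt
    have hKf : HasFDerivAt (fun p : E2 × ℝ => K p.1)
        ((fderiv ℝ K θb).comp (ContinuousLinearMap.fst ℝ E2 ℝ)) x0 :=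
      hKdiff.hasFDerivAt.comp (f := Prod.fst) x0 hasFDerivAt_fst
    have hsnd : HasFDerivAt (fun p : E2 × ℝ => p.2)
        (ContinuousLinearMap.snd ℝ E2 ℝ) x0 := hasFDerivAt_snd
    have := hsnd.smul hKf
    refine this.congr_fderiv ?_
    simp only [hx0, hK0, zero_smul, zero_add]
  have hFd : HasFDerivAt Fc
      ((mulCLM d dbd).comp (ContinuousLinearMap.fst ℝ E2 ℝ)
        - (ContinuousLinearMap.snd ℝ E2 ℝ).smulRight K0) x0 := h1.sub h2
  have hGd : HasFDerivAt G (e : E2 × ℝ →L[ℝ] E2 × ℝ) x0 := by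
    rw [hecoe, hDGm]
    exact hFd.prodMk hasFDerivAt_snd
  -- value of G at x0
  have hFc0 : Fc x0 = 0 := by
    rw [hFcdef, hx0]
    simp only [zero_smul, sub_zero]
    apply lp.ext; funext i
    rw [Nice.nem_apply]
    by_cases hi : i = 0
    · rw [hi, hθb.1, hP]
      show (Real.cos (Real.arccos ω) - ω) * Real.sin (Real.arccos ω) = (0 : lp (fun _ : ℤ => ℝ) 2) i
      rw [Real.cos_arccos (by linarith) (by linarith), sub_self, zero_mul]
      simp
    · rw [hθb.2 i hi, hP]
      show (Real.cos 0 - ω) * Real.sin 0 = (0 : lp (fun _ : ℤ => ℝ) 2) i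
      simp
  have hG0 : G x0 = ((0 : E2), (0:ℝ)) := by
    rw [hG]
    simp only [hFc0, hx0]
    exact Prod.ext hFc0 rfl
  -- local inverse
  have hGca : ContDiffAt ℝ 1 G x0 := hGc.contDiffAt
  set Φ : E2 × ℝ → E2 × ℝ := hGca.localInverse hGd one_ne_zero with hΦdef
  have hΦc : ContDiffAt ℝ 1 Φ (G x0) := hGca.to_localInverse hGd one_ne_zero
  have hΦ0 : Φ (G x0) = x0 := hGca.localInverse_apply_image hGd one_ne_zero
  have hrinv : ∀ᶠ y in nhds (G x0), G (Φ y) = y :=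
    (hGca.hasStrictFDerivAt' hGd one_ne_zero).eventually_right_inverse
  -- restrict to the line α ↦ ((0 : E2), α)
  set Ψ : ℝ → E2 × ℝ := fun α => Φ ((0 : E2), α) with hΨdef
  have hpair : ContDiff ℝ 1 (fun α : ℝ => ((0 : E2), α)) := contDiff_const.prodMk contDiff_id
  have hΨc : ContDiffAt ℝ 1 Ψ 0 := by
    have hΦc' : ContDiffAt ℝ 1 Φ ((fun α : ℝ => ((0 : E2), α)) 0) := by
      simpa [hG0] using hΦc
    exact hΦc'.comp 0 hpair.contDiffAt
  obtain ⟨u, hu, hΨu⟩ := hΨc.contDiffOn le_rfl (by simp)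
  obtain ⟨ε₁, hε₁, hball₁⟩ := Metric.mem_nhds_iff.1 hu
  have hrev : ∀ᶠ α in nhds (0:ℝ), G (Ψ α) = ((0 : E2), α) := by
    have hc : Filter.Tendsto (fun α : ℝ => ((0 : E2), α)) (nhds 0) (nhds (G x0)) := by
      rw [hG0]
      exact (hpair.continuous).tendsto 0
    exact hc.eventually hrinv
  obtain ⟨ε₂, hε₂, hball₂⟩ := Metric.eventually_nhds_iff_ball.1 hrev
  refine ⟨min ε₁ ε₂, lt_min hε₁ hε₂, fun α => (Ψ α).1, ?_, ?_, ?_⟩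
  · -- ContDiffOn
    have hsub : Set.Ico (0:ℝ) (min ε₁ ε₂) ⊆ u := by
      intro α hα
      apply hball₁
      rw [Metric.mem_ball, Real.dist_eq, sub_zero, abs_of_nonneg hα.1]
      exact lt_of_lt_of_le hα.2 (min_le_left _ _)
    exact contDiff_fst.comp_contDiffOn (hΨu.mono hsub)
  · -- solves the equation
    intro α hα
    have hαball : α ∈ Metric.ball (0:ℝ) ε₂ := by
      rw [Metric.mem_ball, Real.dist_eq, sub_zero, abs_of_nonneg hα.1]
      exact lt_of_lt_of_le hα.2 (min_le_right _ _)
    have hGΨ : G (Ψ α) = ((0 : E2), α) := hball₂ α hαball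
    have hGΨ1 : Fc (Ψ α) = 0 := congrArg Prod.fst hGΨ
    have hGΨ2 : (Ψ α).2 = α := congrArg Prod.snd hGΨ
    rw [hFeq]
    have hpe : ((Ψ α).1, α) = Ψ α := Prod.ext rfl hGΨ2.symm
    rw [hpe, hGΨ1]
  · -- initial condition
    have h00 : ((0 : E2), (0:ℝ)) = G x0 := hG0.symm
    show (Φ ((0 : E2), (0:ℝ))).1 = θb
    rw [h00, hΦ0, hx0]
end

section
/- Let n_i(t) = (sin θ_i cos ωt, -sin θ_i sin ωt, cos θ_i) for constants θ_i ∈ ℝ and ω ∈ ℝ. Then n_i(t) satisfies the spin chain equation of motion dn_i/dt = α n_i × (n_{i+1} + n_{i-1}) + (n_i·e₃)(n_i × e₃) for all t if and only if the angles satisfy α[cos θ_i(sin θ_{i+1} + sin θ_{i-1}) - sin θ_i(cos θ_{i+1} + cos θ_{i-1})] = sin θ_i(cos θ_i - ω). -/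
open Real Matrix

theorem breather_ansatz_reduction (α ω : ℝ) (θ : ℤ → ℝ)
    (n : ℤ → ℝ → Fin 3 → ℝ)
    (hn : ∀ i t, n i t
      = ![Real.sin (θ i) * Real.cos (ω * t),
          -(Real.sin (θ i) * Real.sin (ω * t)),
          Real.cos (θ i)])
    (e3 : Fin 3 → ℝ) (he3 : e3 = ![0, 0, 1]) :
    (∀ (i : ℤ) (t : ℝ), HasDerivAt (fun s => n i s)
        (α • (crossProduct (n i t) (n (i+1) t + n (i-1) t))
          + (n i t ⬝ᵥ e3) • (crossProduct (n i t) e3)) t)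
    ↔ (∀ i : ℤ,
        α * (Real.cos (θ i) * (Real.sin (θ (i+1)) + Real.sin (θ (i-1)))
          - Real.sin (θ i) * (Real.cos (θ (i+1)) + Real.cos (θ (i-1))))
        = Real.sin (θ i) * (Real.cos (θ i) - ω)) := by
  have key : ∀ (i : ℤ) (t : ℝ), HasDerivAt (fun s => n i s)
      (![-(Real.sin (θ i) * (Real.sin (ω * t) * ω)),
         -(Real.sin (θ i) * (Real.cos (ω * t) * ω)),
         0]) t := by
    intro i t
    have hfe : (fun s => n i s) = fun s => ![Real.sin (θ i) * Real.cos (ω * s),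
          -(Real.sin (θ i) * Real.sin (ω * s)), Real.cos (θ i)] := funext (hn i)
    rw [hfe, hasDerivAt_pi]
    intro j
    have hω : HasDerivAt (fun s : ℝ => ω * s) ω t := by
      simpa using (hasDerivAt_id t).const_mul ω
    fin_cases j
    · simpa [mul_comm, mul_assoc, mul_left_comm] using (hω.cos).const_mul (Real.sin (θ i))
    · simpa [mul_comm, mul_assoc, mul_left_comm] using ((hω.sin).const_mul (Real.sin (θ i))).fun_neg
    · simpa using (hasDerivAt_const t (Real.cos (θ i)))
  constructor
  · intro h i
    have h0 := (h i 0).unique (key i 0)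
    have h1 := congrFun h0 1
    simp [hn, he3, cross_apply, dotProduct, Fin.sum_univ_three] at h1
    nlinarith [h1]
  · intro h i t
    have hi := h i
    convert key i t using 1
    funext j
    fin_cases j
    · simp [hn, he3, cross_apply, dotProduct, Fin.sum_univ_three]
      linear_combination Real.sin (ω * t) * hi
    · simp [hn, he3, cross_apply, dotProduct, Fin.sum_univ_three]
      linear_combination Real.cos (ω * t) * hi
    · simp [hn, he3, cross_apply, dotProduct, Fin.sum_univ_three]
      right
      ring
end

section
/- For ω ∈ (0,1), the soliton θ(x) = arccos(2ω/(1-(1-ω)tanh²(x√(1-ω))) - 1) satisfies the first-integral equation (θ'(x))²/2 = (1 - cos θ(x))(cos θ(x) + 1 - 2ω)/2 for all x ∈ ℝ. -/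
open Real

theorem soliton_first_integral (ω : ℝ) (hω : ω ∈ Set.Ioo (0:ℝ) 1)
    (θ : ℝ → ℝ)
    (hθ : ∀ x, θ x = arccos (2*ω / (1 - (1-ω) * tanh (x * Real.sqrt (1-ω)) ^ 2) - 1)) :
    ∀ x : ℝ, (deriv θ x)^2 / 2
      = (1 - Real.cos (θ x)) * (1 + Real.cos (θ x) - 2*ω) / 2 := by
  obtain ⟨hω0, hω1⟩ := hω
  intro x
  have h1ω : (0:ℝ) < 1 - ω := by linarith
  obtain ⟨s, hs⟩ : ∃ s : ℝ, Real.sqrt (1 - ω) = s := ⟨_, rfl⟩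
  simp only [hs] at hθ
  have hs2 : s ^ 2 = 1 - ω := by rw [← hs]; exact Real.sq_sqrt h1ω.le
  obtain ⟨c, hc⟩ : ∃ c : ℝ, Real.cosh (x * s) = c := ⟨_, rfl⟩
  obtain ⟨sh, hsh⟩ : ∃ sh : ℝ, Real.sinh (x * s) = sh := ⟨_, rfl⟩
  have hcpos : 0 < c := by rw [← hc]; exact Real.cosh_pos (x * s)
  have hcne : c ≠ 0 := ne_of_gt hcpos
  have hid : c ^ 2 - sh ^ 2 = 1 := by rw [← hc, ← hsh]; exact Real.cosh_sq_sub_sinh_sq (x * s)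
  obtain ⟨t, htt⟩ : ∃ t : ℝ, sh / c = t := ⟨_, rfl⟩
  have ht : Real.tanh (x * s) = t := by
    rw [Real.tanh_eq_sinh_div_cosh, hc, hsh, htt]
  have h1t : 1 - t ^ 2 = 1 / c ^ 2 := by
    rw [← htt]; field_simp; linarith
  have ht2 : t ^ 2 < 1 := by
    have : (0:ℝ) < 1 / c ^ 2 := by positivity
    linarith
  have ht2' : 0 ≤ t ^ 2 := sq_nonneg t
  obtain ⟨D, hD⟩ : ∃ D : ℝ, 1 - (1 - ω) * t ^ 2 = D := ⟨_, rfl⟩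
  have hDω : ω ≤ D := by nlinarith
  have hDpos : 0 < D := lt_of_lt_of_le hω0 hDω
  have hDne : D ≠ 0 := ne_of_gt hDpos
  obtain ⟨fx, hfx⟩ : ∃ fx : ℝ, 2 * ω / D - 1 = fx := ⟨_, rfl⟩
  have h1pf : 1 + fx = 2 * ω / D := by rw [← hfx]; ring
  have h1mf : 1 - fx = 2 * (1 - ω) * (1 - t ^ 2) / D := by
    rw [← hfx]
    field_simp
    linear_combination (-2:ℝ) * hD
  have h1pf2 : 1 + fx - 2 * ω = 2 * ω * (1 - ω) * t ^ 2 / D := by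
    rw [← hfx]
    field_simp
    linear_combination 2 * ω * hD
  have hfpos : 0 < 1 + fx := by rw [h1pf]; positivity
  have hfneg : 0 < 1 - fx := by
    rw [h1mf]; apply div_pos _ hDpos; nlinarith
  have hfne1 : fx ≠ 1 := by linarith
  have hfnem1 : fx ≠ -1 := by linarith
  -- derivative of tanh (y * s) at x
  have hsinh : HasDerivAt (fun y : ℝ => Real.sinh (y * s)) (c * s) x := by
    have := (Real.hasDerivAt_sinh (x * s)).comp x ((hasDerivAt_id x).mul_const s)
    simpa [hc, Function.comp_def] using this
  have hcosh : HasDerivAt (fun y : ℝ => Real.cosh (y * s)) (sh * s) x := by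
    have := (Real.hasDerivAt_cosh (x * s)).comp x ((hasDerivAt_id x).mul_const s)
    simpa [hsh, Function.comp_def] using this
  have htanh : HasDerivAt (fun y : ℝ => Real.tanh (y * s)) (s / c ^ 2) x := by
    have h := hsinh.div hcosh (by rw [hc]; exact hcne)
    rw [hc, hsh] at h
    have heq : (c * s * c - sh * (sh * s)) / c ^ 2 = s / c ^ 2 := by
      rw [div_eq_div_iff (by positivity) (by positivity)]
      linear_combination s * c ^ 2 * hid
    rw [heq] at h
    exact h.congr_of_eventuallyEq (Filter.Eventually.of_forall fun y =>
      Real.tanh_eq_sinh_div_cosh (y * s))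
  -- derivative of the denominator function
  have hDfun : HasDerivAt (fun y : ℝ => 1 - (1 - ω) * tanh (y * s) ^ 2)
      (-((1 - ω) * (2 * t * (s / c ^ 2)))) x := by
    have h2 : HasDerivAt (fun y : ℝ => tanh (y * s) ^ 2) (2 * t * (s / c ^ 2)) x := by
      have h3 := htanh.pow 2
      simpa [ht, Pi.pow_def] using h3
    simpa using (h2.const_mul (1 - ω)).const_sub 1
  have hDval : 1 - (1 - ω) * tanh (x * s) ^ 2 = D := by rw [ht, hD]
  -- derivative of f
  obtain ⟨f', hf'⟩ : ∃ f' : ℝ,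
      (0 * D - 2 * ω * (-((1 - ω) * (2 * t * (s / c ^ 2))))) / D ^ 2 = f' := ⟨_, rfl⟩
  have hffun : HasDerivAt (fun y : ℝ => 2 * ω / (1 - (1 - ω) * tanh (y * s) ^ 2) - 1) f' x := by
    have hnum : HasDerivAt (fun _ : ℝ => 2 * ω) 0 x := hasDerivAt_const x _
    have h4 := (hnum.div hDfun (by rw [hDval]; exact hDne)).sub_const 1
    rw [hDval] at h4
    rw [← hf']
    exact h4
  have hfxval : 2 * ω / (1 - (1 - ω) * tanh (x * s) ^ 2) - 1 = fx := by rw [hDval, hfx]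
  -- derivative of θ
  have hθeq : θ = fun y => arccos (2 * ω / (1 - (1 - ω) * tanh (y * s) ^ 2) - 1) :=
    funext fun y => hθ y
  have harccos : HasDerivAt arccos (-(1 / Real.sqrt (1 - fx ^ 2)))
      (2 * ω / (1 - (1 - ω) * tanh (x * s) ^ 2) - 1) := by
    rw [hfxval]; exact Real.hasDerivAt_arccos hfnem1 hfne1
  have hθder : HasDerivAt θ (-(1 / Real.sqrt (1 - fx ^ 2)) * f') x := by
    rw [hθeq]
    have := harccos.comp x hffun
    exact this
  have hderiv : deriv θ x = -(1 / Real.sqrt (1 - fx ^ 2)) * f' := hθder.deriv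
  have hcosθ : Real.cos (θ x) = fx := by
    rw [hθ x, hfxval]
    exact Real.cos_arccos (by linarith) (by linarith)
  rw [hderiv, hcosθ]
  have h1f2 : 0 < 1 - fx ^ 2 := by
    have h := mul_pos hfneg hfpos
    nlinarith [h]
  have hsq : Real.sqrt (1 - fx ^ 2) ^ 2 = 1 - fx ^ 2 := Real.sq_sqrt h1f2.le
  have hsqpos : 0 < Real.sqrt (1 - fx ^ 2) := Real.sqrt_pos.mpr h1f2
  -- closed form for f'^2
  have hsc : s / c ^ 2 = s * (1 - t ^ 2) := by rw [h1t]; ring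
  have hf2 : f' ^ 2 = 16 * ω^2 * (1-ω)^3 * t^2 * (1 - t^2)^2 / D^4 := by
    rw [← hf', hsc, div_pow,
      show (0 * D - 2 * ω * -((1 - ω) * (2 * t * (s * (1 - t ^ 2))))) ^ 2
        = 16 * ω^2 * (1-ω)^2 * t^2 * (1 - t^2)^2 * s^2 by ring, hs2]
    field_simp
  -- key algebraic identity
  have key : f' ^ 2 = (1 - fx ^ 2) * ((1 - fx) * (1 + fx - 2 * ω)) := by
    have e1 : (1:ℝ) - fx ^ 2 = (1 - fx) * (1 + fx) := by ring
    rw [hf2, e1, h1pf2, h1mf, h1pf]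
    field_simp
    ring
  calc (-(1 / Real.sqrt (1 - fx ^ 2)) * f') ^ 2 / 2
      = f' ^ 2 / (Real.sqrt (1 - fx ^ 2) ^ 2) / 2 := by
        field_simp
    _ = (1 - fx) * (1 + fx - 2 * ω) / 2 := by
        rw [hsq, key]
        field_simp [ne_of_gt h1f2]
end
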